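/- Suppose Condition (2) holds: ∑_{i=1}^∞ w̃_i = ∞ and ∑_{i=1}^∞ w̃_i² < ∞, and the ratings are subjected to a (k, m̃, 𝓘)-misbehavior with k < ∞ and last injected index i_k. Then for every ε ∈ (0,1], every m ∈ 𝓜, and every i > i_k, P[ |β_{i,m} − α_m| > ε ] ≤ 2·exp( −φ̃_i·ε² ), where φ̃_i = 1{ ϕ_{i−1}/(ε·ϕ_{i_k−1}) ≤ 1 }·( 1 − ϕ_{i−1}/(ε·ϕ_{i_k−1}) )² / ( (ϕ_{i−1}²/2)·∑_{j=i_k+1}^i w̃_j²/ϕ_{j−1}² ). -/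

import Mathlib

open MeasureTheory Filter

/-- Cumulative weight `∑_{j=1}^i w_j`. -/
noncomputable def Sw (w : ℕ → ℝ) (i : ℕ) : ℝ := ∑ j ∈ Finset.Icc 1 i, w j

/-- Normalized weight `w̃_i = w_i / ∑_{j=1}^i w_j`. -/
noncomputable def wnorm (w : ℕ → ℝ) (i : ℕ) : ℝ := w i / Sw w i

/-- Historical collective opinion
`β_{i,m} = (∑_{j=1}^i w_j 1{R_j = m}) / (∑_{j=1}^i w_j)`. -/
noncomputable def betaH {Ω : Type*} (w : ℕ → ℝ) (R : ℕ → Ω → ℕ) (i m : ℕ) (ω : Ω) : ℝ :=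
  (∑ j ∈ Finset.Icc 1 i, w j * (if R j ω = m then (1 : ℝ) else 0)) / Sw w i

/-- `𝓗_i`: the σ-algebra generated by `R_1, …, R_i` (trivial for `i = 0`). -/
def Hsig {Ω : Type*} (R : ℕ → Ω → ℕ) (i : ℕ) : MeasurableSpace Ω :=
  ⨆ j ∈ Finset.Icc 1 i, MeasurableSpace.comap (R j) ⊤

/-- `ϕ_j = ∏_{ℓ=1}^j [1 − w̃_{ℓ+1} (1 − γ_ℓ + η_ℓ γ_ℓ)]` (with `ϕ_0 = 1`),
where `wt` is the sequence of normalized weights. -/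
noncomputable def varphi (wt γ η : ℕ → ℝ) (j : ℕ) : ℝ :=
  ∏ ℓ ∈ Finset.Icc 1 j, (1 - wt (ℓ + 1) * (1 - γ ℓ + η ℓ * γ ℓ))

/-- Misbehavior-adjusted convergence-speed metric (for last injected index `ik ≥ 1`):
`φ̃_i = 1{ϕ_{i−1}/(ε ϕ_{ik−1}) ≤ 1} (1 − ϕ_{i−1}/(ε ϕ_{ik−1}))²
        / ((ϕ_{i−1}²/2) ∑_{j=ik+1}^i w̃_j²/ϕ_{j−1}²)`. -/
noncomputable def phiTilde (wt γ η : ℕ → ℝ) (ik : ℕ) (ε : ℝ) (i : ℕ) : ℝ :=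
  (if varphi wt γ η (i - 1) / (ε * varphi wt γ η (ik - 1)) ≤ 1 then
      (1 - varphi wt γ η (i - 1) / (ε * varphi wt γ η (ik - 1))) ^ 2
    else 0) /
    ((varphi wt γ η (i - 1)) ^ 2 / 2 *
      ∑ j ∈ Finset.Icc (ik + 1) i, (wt j) ^ 2 / (varphi wt γ η (j - 1)) ^ 2)

/-!
Dividing the deviation `β_n - α_m` by `ϕ_{n-1}` turns the herding recursion into
`S_{n+1} = S_n + (w̃_{n+1} / ϕ_n) (1{R_{n+1} = m} - c_n)`, where `c_n` is the conditional
probability of the model. After the last injected index `i_k` every increment is a conditionally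
centred Bernoulli variable, so Hoeffding's lemma and the tower property make `S_i - S_{i_k}`
sub-Gaussian with variance proxy `∑_{j=i_k+1}^i (w̃_j / ϕ_{j-1})² / 4` (Azuma–Hoeffding).
The injected ratings only enter through `|S_{i_k}| ≤ 1 / ϕ_{i_k-1}`, so `|β_i - α_m| > ε` forces
`|S_i - S_{i_k}| ≥ (ε - ϕ_{i-1} / ϕ_{i_k-1}) / ϕ_{i-1}`, and a two-sided Chernoff bound concludes.
-/

open ProbabilityTheory Real
open scoped NNReal

/-- Hoeffding's lemma for `B ~ Bernoulli(p)`: the left side is `𝔼 exp (t (B - p))`. -/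
lemma bernoulli_mgf_le {p : ℝ} (hp : p ∈ Set.Icc 0 1) (t : ℝ) :
    (1 - p + p * exp t) * exp (-(t * p)) ≤ exp (t ^ 2 / 8) := by
  let μ : Measure ℝ := bernoulliMeasure 1 0 ⟨p, hp⟩
  have hsupp : ∀ᵐ z ∂μ, id z ∈ Set.Icc (0 : ℝ) 1 :=
    ae_iff.2 (bernoulliMeasure_apply_of_notMem_of_notMem _ measurableSet_Icc.compl
      (by norm_num) (by norm_num))
  have h := (hasSubgaussianMGF_of_mem_Icc aemeasurable_id hsupp).mgf_le t
  simp only [mgf, integral_bernoulliMeasure, μ, id, smul_eq_mul] at h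
  convert h using 1
  · rw [show t * (1 - (p * 1 + (1 - p) * 0)) = t + -(t * p) by ring, exp_add]; ring_nf
  · norm_num; ring_nf

lemma integral_mul_eq_integral_mul_condExp {Ω : Type*} {m mΩ : MeasurableSpace Ω}
    {μ : Measure Ω} (hm : m ≤ mΩ) [SigmaFinite (μ.trim hm)] {φ X : Ω → ℝ}
    (hφ : StronglyMeasurable[m] φ) (hφX : Integrable (φ * X) μ) (hX : Integrable X μ) :
    ∫ ω, φ ω * X ω ∂μ = ∫ ω, φ ω * μ[X | m] ω ∂μ := by
  rw [← integral_condExp hm]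
  exact integral_congr_ae (condExp_mul_of_stronglyMeasurable_left hφ hφX hX)

/-- For `X ∈ {0, 1}`, `exp (t (X - c)) = exp (-t c) (1 + (exp t - 1) X)`; against `m`-measurable
weights `X` may be replaced by its conditional expectation `c`, which leaves the Bernoulli(`c`)
moment generating function. -/
lemma integral_mul_exp_mul_sub_le {Ω : Type*} {m mΩ : MeasurableSpace Ω} {μ : Measure Ω}
    [IsFiniteMeasure μ] (hm : m ≤ mΩ) {f X c : Ω → ℝ} (hf : Integrable f μ)
    (hfm : Measurable[m] f) (hf0 : ∀ ω, 0 ≤ f ω) (hX : ∀ ω, X ω = 0 ∨ X ω = 1)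
    (hXm : Measurable X) (hcm : Measurable[m] c) (hc : ∀ ω, c ω ∈ Set.Icc 0 1)
    (hcond : μ[X | m] =ᵐ[μ] c) (t : ℝ) :
    ∫ ω, f ω * exp (t * (X ω - c ω)) ∂μ ≤ (∫ ω, f ω ∂μ) * exp (t ^ 2 / 8) := by
  have hX_norm : ∀ ω, ‖X ω‖ ≤ 1 := fun ω => by rcases hX ω with h | h <;> simp [h]
  have hc_norm : ∀ ω, ‖c ω‖ ≤ 1 := fun ω => by
    rw [Real.norm_eq_abs, abs_le]; constructor <;> linarith [(hc ω).1, (hc ω).2]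
  have hcm' : Measurable c := hcm.mono hm le_rfl
  set g : Ω → ℝ := fun ω => f ω * exp (-(t * c ω))
  set φ : Ω → ℝ := fun ω => (exp t - 1) * g ω
  have hg : Integrable g μ := by
    refine hf.mul_bdd (c := exp |t|) (by fun_prop) (ae_of_all _ fun ω => ?_)
    have htc : |t * c ω| ≤ |t| := by
      rw [abs_mul]; exact mul_le_of_le_one_right (abs_nonneg t) (hc_norm ω)
    rw [Real.norm_of_nonneg (exp_pos _).le, exp_le_exp]
    linarith [neg_abs_le (t * c ω)]
  have hφm : StronglyMeasurable[m] φ := by fun_prop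
  have hφ : Integrable φ μ := hg.const_mul _
  have hφX : Integrable (fun ω => φ ω * X ω) μ :=
    hφ.mul_bdd hXm.aestronglyMeasurable (ae_of_all _ hX_norm)
  have hφc : Integrable (fun ω => φ ω * c ω) μ :=
    hφ.mul_bdd hcm'.aestronglyMeasurable (ae_of_all _ hc_norm)
  have hpull : ∫ ω, φ ω * X ω ∂μ = ∫ ω, φ ω * c ω ∂μ := by
    rw [integral_mul_eq_integral_mul_condExp hm hφm hφX
      (.of_bound hXm.aestronglyMeasurable 1 (ae_of_all _ hX_norm))]
    exact integral_congr_ae (hcond.mono fun ω h => congrArg (φ ω * ·) h)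
  have hpt : ∀ ω, f ω * exp (t * (X ω - c ω)) = g ω + φ ω * X ω := fun ω => by
    rcases hX ω with h | h <;> simp only [h, g, φ]
    · ring_nf
    · rw [show t * (1 - c ω) = t + -(t * c ω) by ring, exp_add]; ring
  calc ∫ ω, f ω * exp (t * (X ω - c ω)) ∂μ = ∫ ω, g ω + φ ω * X ω ∂μ := by simp_rw [hpt]
    _ = ∫ ω, g ω + φ ω * c ω ∂μ := by
      rw [integral_add hg hφX, integral_add hg hφc, hpull]
    _ ≤ ∫ ω, f ω * exp (t ^ 2 / 8) ∂μ := by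
      refine integral_mono (hg.add hφc) (hf.mul_const _) fun ω => ?_
      calc g ω + φ ω * c ω = f ω * ((1 - c ω + c ω * exp t) * exp (-(t * c ω))) := by ring
        _ ≤ f ω * exp (t ^ 2 / 8) := mul_le_mul_of_nonneg_left (bernoulli_mgf_le (hc ω) t) (hf0 ω)
    _ = (∫ ω, f ω ∂μ) * exp (t ^ 2 / 8) := integral_mul_const _ _

/-- Azuma–Hoeffding for conditionally Bernoulli increments; unlike
`HasSubgaussianMGF.sum_of_hasCondSubgaussianMGF`, this needs no `StandardBorelSpace Ω`. -/
theorem hasSubgaussianMGF_of_bernoulli_increments {Ω : Type*} {mΩ : MeasurableSpace Ω}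
    {μ : Measure Ω} [IsProbabilityMeasure μ] {F : ℕ → MeasurableSpace Ω} (hF : ∀ n, F n ≤ mΩ)
    {T X c : ℕ → Ω → ℝ} {r : ℕ → ℝ} {n₀ : ℕ} (hT₀ : ∀ ω, T n₀ ω = 0)
    (hT : ∀ n ≥ n₀, Measurable[F n] (T n))
    (hX : ∀ n ≥ n₀, ∀ ω, X (n + 1) ω = 0 ∨ X (n + 1) ω = 1)
    (hXm : ∀ n ≥ n₀, Measurable (X (n + 1)))
    (hcm : ∀ n ≥ n₀, Measurable[F n] (c n)) (hc : ∀ n ≥ n₀, ∀ ω, c n ω ∈ Set.Icc 0 1)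
    (hcond : ∀ n ≥ n₀, μ[X (n + 1) | F n] =ᵐ[μ] c n)
    (hstep : ∀ n ≥ n₀, ∀ ω, T (n + 1) ω = T n ω + r (n + 1) * (X (n + 1) ω - c n ω)) :
    ∀ n ≥ n₀, HasSubgaussianMGF (T n) (∑ j ∈ Finset.Icc (n₀ + 1) n, (‖r j‖₊ / 2) ^ 2) μ := by
  intro n hn
  induction n, hn using Nat.le_induction with
  | base =>
    rw [Finset.Icc_eq_empty (by omega), Finset.sum_empty, show T n₀ = fun _ => 0 from funext hT₀]
    exact HasSubgaussianMGF.fun_zero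
  | succ n hn ih =>
    have hT' : ∀ t ω, exp (t * T (n + 1) ω)
        = exp (t * T n ω) * exp (t * r (n + 1) * (X (n + 1) ω - c n ω)) := fun t ω => by
      rw [← exp_add, hstep n hn ω]; ring_nf
    have hcm' : Measurable (c n) := (hcm n hn).mono (hF n) le_rfl
    refine ⟨fun t => ?_, fun t => ?_⟩
    · simp_rw [hT']
      refine (ih.integrable_exp_mul t).mul_bdd (c := exp |t * r (n + 1)|) (by fun_prop)
        (ae_of_all _ fun ω => ?_)
      have hXc : |X (n + 1) ω - c n ω| ≤ 1 := by
        have := hc n hn ω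
        rcases hX n hn ω with h | h <;> rw [h, abs_le] <;> constructor <;> linarith [this.1, this.2]
      rw [Real.norm_of_nonneg (exp_pos _).le, exp_le_exp]
      refine (le_abs_self _).trans ?_
      rw [abs_mul]
      exact mul_le_of_le_one_right (abs_nonneg _) hXc
    · have hstep_mgf := integral_mul_exp_mul_sub_le (hF n) (ih.integrable_exp_mul t)
        (by fun_prop) (fun ω => (exp_pos _).le) (hX n hn) (hXm n hn) (hcm n hn) (hc n hn)
        (hcond n hn) (t * r (n + 1))
      calc mgf (T (n + 1)) μ t
          = ∫ ω, exp (t * T n ω) * exp (t * r (n + 1) * (X (n + 1) ω - c n ω)) ∂μ := by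
            simp_rw [mgf, hT']
        _ ≤ mgf (T n) μ t * exp ((t * r (n + 1)) ^ 2 / 8) := hstep_mgf
        _ ≤ exp (((∑ j ∈ Finset.Icc (n₀ + 1) n, (‖r j‖₊ / 2) ^ 2 : ℝ≥0) : ℝ) * t ^ 2 / 2)
              * exp ((t * r (n + 1)) ^ 2 / 8) := by gcongr; exact ih.mgf_le t
        _ = _ := by
          rw [← exp_add, Finset.sum_Icc_succ_top (by omega)]
          push_cast
          rw [Real.norm_eq_abs (r (n + 1)), div_pow, sq_abs]
          ring_nf

namespace ProbabilityTheory.HasSubgaussianMGF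

lemma measure_le_abs_le {Ω : Type*} {mΩ : MeasurableSpace Ω}
    {μ : Measure Ω} [IsFiniteMeasure μ] {X : Ω → ℝ} {c : ℝ≥0} (h : HasSubgaussianMGF X c μ)
    {ε : ℝ} (hε : 0 ≤ ε) :
    μ {ω | ε ≤ |X ω|} ≤ ENNReal.ofReal (2 * exp (-ε ^ 2 / (2 * c))) := by
  calc μ {ω | ε ≤ |X ω|} ≤ μ ({ω | ε ≤ X ω} ∪ {ω | ε ≤ (-X) ω}) :=
        measure_mono fun ω (hω : ε ≤ |X ω|) => show ε ≤ X ω ∨ ε ≤ -X ω from le_abs.1 hω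
    _ ≤ μ {ω | ε ≤ X ω} + μ {ω | ε ≤ (-X) ω} := measure_union_le _ _
    _ = ENNReal.ofReal (μ.real {ω | ε ≤ X ω}) + ENNReal.ofReal (μ.real {ω | ε ≤ (-X) ω}) := by
        rw [ofReal_measureReal, ofReal_measureReal]
    _ ≤ ENNReal.ofReal (exp (-ε ^ 2 / (2 * c))) + ENNReal.ofReal (exp (-ε ^ 2 / (2 * c))) :=
        add_le_add (ENNReal.ofReal_le_ofReal (h.measure_ge_le hε))
          (ENNReal.ofReal_le_ofReal (h.neg.measure_ge_le hε))
    _ = ENNReal.ofReal (2 * exp (-ε ^ 2 / (2 * c))) := by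
        rw [← ENNReal.ofReal_add (exp_pos _).le (exp_pos _).le, ← two_mul]

lemma measure_lt_abs_le_of_abs_le {Ω : Type*} {mΩ : MeasurableSpace Ω}
    {μ : Measure Ω} [IsFiniteMeasure μ] {T Y : Ω → ℝ} {c : ℝ≥0} (h : HasSubgaussianMGF T c μ)
    {b ρ ε : ℝ} (hb : 0 < b) (hY : ∀ ω, |Y ω| ≤ b * |T ω| + ρ) (hρε : ρ < ε) :
    μ {ω | ε < |Y ω|} ≤ ENNReal.ofReal (2 * exp (-((ε - ρ) / b) ^ 2 / (2 * c))) := by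
  refine (measure_mono fun ω (hω : ε < |Y ω|) => ?_).trans
    (h.measure_le_abs_le (div_pos (sub_pos.2 hρε) hb).le)
  show (ε - ρ) / b ≤ |T ω|
  rw [div_le_iff₀ hb]
  linarith [hY ω]

end ProbabilityTheory.HasSubgaussianMGF

section Weights

variable {w : ℕ → ℝ}

lemma Sw_succ (n : ℕ) : Sw w (n + 1) = Sw w n + w (n + 1) :=
  Finset.sum_Icc_succ_top (Nat.le_add_left 1 n) w

lemma Sw_nonneg (hw : ∀ j, 0 ≤ w j) (n : ℕ) : 0 ≤ Sw w n :=
  Finset.sum_nonneg fun j _ => hw j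

lemma Sw_pos (hw : ∀ j, 0 ≤ w j) (hw1 : 0 < w 1) {n : ℕ} (hn : 1 ≤ n) : 0 < Sw w n :=
  hw1.trans_le (Finset.single_le_sum (fun j _ => hw j) (Finset.mem_Icc.2 ⟨le_rfl, hn⟩))

lemma wnorm_nonneg (hw : ∀ j, 0 ≤ w j) (n : ℕ) : 0 ≤ wnorm w n :=
  div_nonneg (hw n) (Sw_nonneg hw n)

lemma wnorm_lt_one (hw : ∀ j, 0 ≤ w j) (hw1 : 0 < w 1) {n : ℕ} (hn : 2 ≤ n) :
    wnorm w n < 1 := by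
  obtain ⟨k, rfl⟩ : ∃ k, n = k + 1 := ⟨n - 1, by omega⟩
  rw [wnorm, div_lt_one (Sw_pos hw hw1 (by omega)), Sw_succ]
  linarith [Sw_pos hw hw1 (n := k) (by omega)]

end Weights

section Varphi

variable {wt γ η : ℕ → ℝ}

lemma varphi_succ (k : ℕ) :
    varphi wt γ η (k + 1)
      = varphi wt γ η k * (1 - wt (k + 2) * (1 - γ (k + 1) + η (k + 1) * γ (k + 1))) :=
  Finset.prod_Icc_succ_top (Nat.le_add_left 1 k) _

lemma varphi_pos (hwt0 : ∀ n, 0 ≤ wt n) (hwt1 : ∀ n, 2 ≤ n → wt n < 1)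
    (hγ : ∀ i, γ i ∈ Set.Icc (0 : ℝ) 1) (hη : ∀ i, η i ∈ Set.Icc (0 : ℝ) 1) (n : ℕ) :
    0 < varphi wt γ η n := by
  refine Finset.prod_pos fun ℓ hℓ => ?_
  have hℓ1 := (Finset.mem_Icc.1 hℓ).1
  obtain ⟨hγ0, hγ1⟩ := hγ ℓ
  obtain ⟨hη0, hη1⟩ := hη ℓ
  have hwt := hwt1 (ℓ + 1) (by omega)
  have hu : 1 - γ ℓ + η ℓ * γ ℓ ≤ 1 := by nlinarith
  nlinarith [hwt0 (ℓ + 1), mul_nonneg hη0 hγ0]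

lemma varphi_wnorm_pos {w : ℕ → ℝ} (hw : ∀ j, 0 ≤ w j) (hw1 : 0 < w 1)
    (hγ : ∀ i, γ i ∈ Set.Icc (0 : ℝ) 1) (hη : ∀ i, η i ∈ Set.Icc (0 : ℝ) 1) (n : ℕ) :
    0 < varphi (wnorm w) γ η n :=
  varphi_pos (wnorm_nonneg hw) (fun _ => wnorm_lt_one hw hw1) hγ hη n

end Varphi

section PhiTilde

variable {wt γ η : ℕ → ℝ} {ik i : ℕ} {ε : ℝ}

lemma phiTilde_eq_zero_of_le (hε : 0 < ε) (hk : 0 < varphi wt γ η (ik - 1))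
    (h : ε ≤ varphi wt γ η (i - 1) / varphi wt γ η (ik - 1)) :
    phiTilde wt γ η ik ε i = 0 := by
  rw [le_div_iff₀ hk] at h
  unfold phiTilde
  split_ifs with hq
  · rw [le_antisymm hq ((one_le_div (mul_pos hε hk)).2 h)]
    simp
  · exact zero_div _

lemma phiTilde_mul_sq_of_lt (hε : 0 < ε) (hk : 0 < varphi wt γ η (ik - 1))
    (hi : 0 < varphi wt γ η (i - 1))
    (h : varphi wt γ η (i - 1) / varphi wt γ η (ik - 1) < ε) :
    phiTilde wt γ η ik ε i * ε ^ 2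
      = ((ε - varphi wt γ η (i - 1) / varphi wt γ η (ik - 1)) / varphi wt γ η (i - 1)) ^ 2
        / (2 * ((∑ j ∈ Finset.Icc (ik + 1) i, (‖wt j / varphi wt γ η (j - 1)‖₊ / 2) ^ 2 : ℝ≥0) : ℝ))
    := by
  have hq : varphi wt γ η (i - 1) / (ε * varphi wt γ η (ik - 1)) ≤ 1 := by
    rw [div_le_one (mul_pos hε hk)]
    rw [div_lt_iff₀ hk] at h
    exact h.le
  have hsum : ((∑ j ∈ Finset.Icc (ik + 1) i, (‖wt j / varphi wt γ η (j - 1)‖₊ / 2) ^ 2 : ℝ≥0) : ℝ)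
      = (∑ j ∈ Finset.Icc (ik + 1) i, wt j ^ 2 / varphi wt γ η (j - 1) ^ 2) / 4 := by
    push_cast
    rw [Finset.sum_div]
    refine Finset.sum_congr rfl fun j _ => ?_
    rw [Real.norm_eq_abs, div_pow, sq_abs, div_pow]
    ring
  unfold phiTilde
  rw [if_pos hq, hsum]
  rcases eq_or_ne (∑ j ∈ Finset.Icc (ik + 1) i, wt j ^ 2 / varphi wt γ η (j - 1) ^ 2) 0
    with hV | hV
  · simp [hV]
  · field_simp
    ring

end PhiTilde

section History

variable {Ω : Type*} {w : ℕ → ℝ} {R : ℕ → Ω → ℕ} {m : ℕ}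

lemma betaH_mem_Icc (hw : ∀ j, 0 ≤ w j) (hw1 : 0 < w 1) {n : ℕ} (hn : 1 ≤ n) (ω : Ω) :
    betaH w R n m ω ∈ Set.Icc (0 : ℝ) 1 := by
  have hind : ∀ j, 0 ≤ w j * (if R j ω = m then (1 : ℝ) else 0) ∧
      w j * (if R j ω = m then (1 : ℝ) else 0) ≤ w j := fun j => by
    split_ifs <;> simp [hw j]
  exact ⟨div_nonneg (Finset.sum_nonneg fun j _ => (hind j).1) (Sw_nonneg hw n),
    (div_le_one (Sw_pos hw hw1 hn)).2 (Finset.sum_le_sum fun j _ => (hind j).2)⟩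

lemma betaH_succ (hw : ∀ j, 0 ≤ w j) (hw1 : 0 < w 1) {n : ℕ} (hn : 1 ≤ n) (ω : Ω) :
    betaH w R (n + 1) m ω
      = (1 - wnorm w (n + 1)) * betaH w R n m ω
        + wnorm w (n + 1) * (if R (n + 1) ω = m then 1 else 0) := by
  have h1 := (Sw_pos hw hw1 hn).ne'
  have h2 := (Sw_pos hw hw1 (Nat.le_add_left 1 n)).ne'
  rw [Sw_succ] at h2
  unfold betaH wnorm
  rw [Finset.sum_Icc_succ_top (Nat.le_add_left 1 n), Sw_succ]
  field_simp
  ring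

lemma Hsig_le {mΩ : MeasurableSpace Ω} (hR : ∀ i, Measurable (R i)) (n : ℕ) :
    Hsig R n ≤ mΩ :=
  iSup₂_le fun j _ => (measurable_iff_comap_le.1 (hR j)).trans' (MeasurableSpace.comap_mono le_top)

lemma measurable_ite_Hsig {n j : ℕ} (hj1 : 1 ≤ j) (hjn : j ≤ n) :
    Measurable[Hsig R n] fun ω => if R j ω = m then (1 : ℝ) else 0 := by
  have hRj : Measurable[Hsig R n] (R j) := measurable_iff_comap_le.2 <|
    le_iSup₂_of_le (f := fun j _ => MeasurableSpace.comap (R j) ⊤) j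
      (Finset.mem_Icc.2 ⟨hj1, hjn⟩) le_rfl
  exact (measurable_from_top (f := fun k : ℕ => if k = m then (1 : ℝ) else 0)).comp hRj

lemma measurable_betaH_Hsig {n j : ℕ} (hjn : j ≤ n) :
    Measurable[Hsig R n] (betaH w R j m) :=
  (Finset.measurable_sum _ fun l hl => (measurable_ite_Hsig (Finset.mem_Icc.1 hl).1
    ((Finset.mem_Icc.1 hl).2.trans hjn)).const_mul (w l)).div_const _

end History

section Herding

variable {Ω : Type*} {w γ η : ℕ → ℝ} {R : ℕ → Ω → ℕ} {m : ℕ} {a : ℝ}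

/-- `c_n`: under the herding model, the conditional probability of `R_{n+1} = m` given `𝓗_n`,
where `a = α_m`. -/
noncomputable def herdingProb (w γ η : ℕ → ℝ) (R : ℕ → Ω → ℕ) (m : ℕ) (a : ℝ) (n : ℕ)
    (ω : Ω) : ℝ :=
  γ n * ((1 - η n) * betaH w R n m ω + η n * a) + (1 - γ n) * a

noncomputable def scaledDev (w γ η : ℕ → ℝ) (R : ℕ → Ω → ℕ) (m : ℕ) (a : ℝ) (n : ℕ)
    (ω : Ω) : ℝ :=
  (betaH w R n m ω - a) / varphi (wnorm w) γ η (n - 1)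

lemma herdingProb_mem_Icc (hw : ∀ j, 0 ≤ w j) (hw1 : 0 < w 1)
    (hγ : ∀ i, γ i ∈ Set.Icc (0 : ℝ) 1) (hη : ∀ i, η i ∈ Set.Icc (0 : ℝ) 1)
    (ha : a ∈ Set.Icc (0 : ℝ) 1) {n : ℕ} (hn : 1 ≤ n) (ω : Ω) :
    herdingProb w γ η R m a n ω ∈ Set.Icc (0 : ℝ) 1 := by
  obtain ⟨hb0, hb1⟩ := betaH_mem_Icc (R := R) (m := m) hw hw1 hn ω
  obtain ⟨hγ0, hγ1⟩ := hγ n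
  obtain ⟨hη0, hη1⟩ := hη n
  obtain ⟨ha0, ha1⟩ := ha
  have hmix0 : 0 ≤ (1 - η n) * betaH w R n m ω + η n * a := by positivity
  have hmix1 : (1 - η n) * betaH w R n m ω + η n * a ≤ 1 := by nlinarith
  constructor <;> unfold herdingProb <;> nlinarith

/-- The herding term `c_n - a = γ_n (1 - η_n) (β_n - a)` is absorbed by the factor of `ϕ_n`,
so only the centred increment `1{R_{n+1} = m} - c_n` survives. -/
lemma scaledDev_succ (hw : ∀ j, 0 ≤ w j) (hw1 : 0 < w 1)
    (hγ : ∀ i, γ i ∈ Set.Icc (0 : ℝ) 1) (hη : ∀ i, η i ∈ Set.Icc (0 : ℝ) 1)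
    {n : ℕ} (hn : 1 ≤ n) (ω : Ω) :
    scaledDev w γ η R m a (n + 1) ω
      = scaledDev w γ η R m a n ω + wnorm w (n + 1) / varphi (wnorm w) γ η n
          * ((if R (n + 1) ω = m then 1 else 0) - herdingProb w γ η R m a n ω) := by
  obtain ⟨k, rfl⟩ : ∃ k, n = k + 1 := ⟨n - 1, by omega⟩
  have hϕ := (varphi_wnorm_pos hw hw1 hγ hη k).ne'
  have hϕ' := (varphi_wnorm_pos hw hw1 hγ hη (k + 1)).ne'
  rw [varphi_succ] at hϕ'
  have hfac := right_ne_zero_of_mul hϕ'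
  simp only [scaledDev, herdingProb, Nat.add_sub_cancel, betaH_succ hw hw1 hn, varphi_succ]
  rw [show k + 1 + 1 = k + 2 from rfl]
  set D := 1 - wnorm w (k + 2) * (1 - γ (k + 1) + η (k + 1) * γ (k + 1)) with hD
  field_simp
  rw [hD]
  ring

lemma abs_betaH_sub_le (hw : ∀ j, 0 ≤ w j) (hw1 : 0 < w 1)
    (hγ : ∀ i, γ i ∈ Set.Icc (0 : ℝ) 1) (hη : ∀ i, η i ∈ Set.Icc (0 : ℝ) 1)
    (ha : a ∈ Set.Icc (0 : ℝ) 1) {n₀ n : ℕ} (hn₀ : 1 ≤ n₀) (ω : Ω) :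
    |betaH w R n m ω - a|
      ≤ varphi (wnorm w) γ η (n - 1)
          * |scaledDev w γ η R m a n ω - scaledDev w γ η R m a n₀ ω|
        + varphi (wnorm w) γ η (n - 1) / varphi (wnorm w) γ η (n₀ - 1) := by
  have hϕ := varphi_wnorm_pos hw hw1 hγ hη (n - 1)
  have hϕ₀ := varphi_wnorm_pos hw hw1 hγ hη (n₀ - 1)
  have hS₀ : |scaledDev w γ η R m a n₀ ω| ≤ 1 / varphi (wnorm w) γ η (n₀ - 1) := by
    obtain ⟨hb0, hb1⟩ := betaH_mem_Icc (R := R) (m := m) hw hw1 hn₀ ω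
    rw [scaledDev, abs_div, abs_of_pos hϕ₀]
    gcongr
    exact abs_le.2 ⟨by linarith [ha.2], by linarith [ha.1]⟩
  have hsplit : betaH w R n m ω - a = varphi (wnorm w) γ η (n - 1)
      * (scaledDev w γ η R m a n ω - scaledDev w γ η R m a n₀ ω)
      + varphi (wnorm w) γ η (n - 1) * scaledDev w γ η R m a n₀ ω := by
    rw [scaledDev]; field_simp; ring
  calc |betaH w R n m ω - a|
      ≤ varphi (wnorm w) γ η (n - 1)
          * |scaledDev w γ η R m a n ω - scaledDev w γ η R m a n₀ ω|
        + varphi (wnorm w) γ η (n - 1) * |scaledDev w γ η R m a n₀ ω| := by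
        rw [hsplit]
        refine (abs_add_le _ _).trans_eq ?_
        rw [abs_mul, abs_mul, abs_of_pos hϕ]
    _ ≤ _ := by
        rw [div_eq_mul_one_div]
        gcongr

theorem hasSubgaussianMGF_scaledDev_sub {mΩ : MeasurableSpace Ω} {μ : Measure Ω}
    [IsProbabilityMeasure μ] (hw : ∀ j, 0 ≤ w j) (hw1 : 0 < w 1)
    (hγ : ∀ i, γ i ∈ Set.Icc (0 : ℝ) 1) (hη : ∀ i, η i ∈ Set.Icc (0 : ℝ) 1)
    (ha : a ∈ Set.Icc (0 : ℝ) 1) (hR : ∀ i, Measurable (R i)) {n₀ : ℕ} (hn₀ : 1 ≤ n₀)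
    (hcond : ∀ n ≥ n₀, μ[fun ω => if R (n + 1) ω = m then (1 : ℝ) else 0 | Hsig R n]
      =ᵐ[μ] herdingProb w γ η R m a n) :
    ∀ n ≥ n₀, HasSubgaussianMGF
      (fun ω => scaledDev w γ η R m a n ω - scaledDev w γ η R m a n₀ ω)
      (∑ j ∈ Finset.Icc (n₀ + 1) n, (‖wnorm w j / varphi (wnorm w) γ η (j - 1)‖₊ / 2) ^ 2) μ := by
  have hβ : ∀ {n j}, j ≤ n → Measurable[Hsig R n] (betaH w R j m) := measurable_betaH_Hsig
  refine hasSubgaussianMGF_of_bernoulli_increments (Hsig_le hR)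
    (X := fun j ω => if R j ω = m then 1 else 0) (c := herdingProb w γ η R m a)
    (r := fun j => wnorm w j / varphi (wnorm w) γ η (j - 1)) (fun _ => sub_self _)
    (fun n hn => ?_) (fun n _ ω => ?_) (fun n hn => ?_) (fun n _ => ?_)
    (fun n hn => herdingProb_mem_Icc hw hw1 hγ hη ha (hn₀.trans hn)) hcond (fun n hn ω => ?_)
  · exact (((hβ le_rfl).sub_const a).div_const _).sub (((hβ hn).sub_const a).div_const _)
  · split_ifs <;> simp
  · exact (measurable_ite_Hsig (by omega) le_rfl).mono (Hsig_le hR _) le_rfl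
  · exact ((((hβ le_rfl).const_mul _).add_const _).const_mul _).add_const _
  · rw [scaledDev_succ hw hw1 hγ hη (hn₀.trans hn), Nat.add_sub_cancel]
    ring

end Herding

theorem stmt_6_general
    {Ω : Type*} [MeasurableSpace Ω] (μ : Measure Ω) [IsProbabilityMeasure μ]
    (M : ℕ)
    (α : ℕ → ℝ) (hα : ∀ m ∈ Finset.Icc 1 M, α m ∈ Set.Icc (0 : ℝ) 1)
    (R : ℕ → Ω → ℕ)
    (hRmeas : ∀ i, Measurable (R i))
    (w : ℕ → ℝ) (hw : ∀ j, 0 ≤ w j) (hw1 : 0 < w 1)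
    (γ : ℕ → ℝ) (hγ : ∀ i, γ i ∈ Set.Icc (0 : ℝ) 1)
    (η : ℕ → ℝ) (hη : ∀ i, η i ∈ Set.Icc (0 : ℝ) 1)
    -- `(k, m̃, 𝓘)`-misbehavior with `𝓘` finite, `ik = max 𝓘` the last injected index
    (I : Finset ℕ) (hI1 : ∀ i ∈ I, 1 ≤ i)
    (ik : ℕ) (hik : ik ∈ I) (hikmax : ∀ j ∈ I, j ≤ ik)
    -- outside the injected indices, ratings follow the linear herding model
    (hmodel : ∀ i : ℕ, 1 ≤ i → (i + 1) ∉ I → ∀ m ∈ Finset.Icc 1 M,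
      μ[(fun ω => if R (i + 1) ω = m then (1 : ℝ) else 0) | Hsig R i]
        =ᵐ[μ] fun ω =>
          γ i * ((1 - η i) * betaH w R i m ω + η i * α m) + (1 - γ i) * α m) :
    ∀ ε : ℝ, 0 < ε → ε ≤ 1 → ∀ m ∈ Finset.Icc 1 M, ∀ i : ℕ, ik < i →
      μ {ω | ε < |betaH w R i m ω - α m|}
        ≤ ENNReal.ofReal (2 * Real.exp (-(phiTilde (wnorm w) γ η ik ε i) * ε ^ 2)) := by

  intro ε hε _ m hm i hi
  have hik1 : 1 ≤ ik := hI1 ik hik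
  have hϕ := varphi_wnorm_pos hw hw1 hγ hη
  have hsubG := hasSubgaussianMGF_scaledDev_sub (μ := μ) (R := R) hw hw1 hγ hη (hα m hm) hRmeas
    hik1 (fun n hn => hmodel n (hik1.trans hn) (fun h => by have := hikmax _ h; omega) m hm)
    i hi.le
  rcases le_or_gt ε (varphi (wnorm w) γ η (i - 1) / varphi (wnorm w) γ η (ik - 1))
    with hle | hlt
  · rw [phiTilde_eq_zero_of_le hε (hϕ _) hle, neg_zero, zero_mul, exp_zero]
    exact prob_le_one.trans (by norm_num)
  · rw [neg_mul, phiTilde_mul_sq_of_lt hε (hϕ _) (hϕ _) hlt, ← neg_div]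
    exact hsubG.measure_lt_abs_le_of_abs_le (hϕ _)
      (fun ω => abs_betaH_sub_le hw hw1 hγ hη (hα m hm) hik1 ω) hlt

/-- Under Condition (2) and a `(k, m̃, 𝓘)`-misbehavior with last
injected index `i_k`, for every `ε ∈ (0,1]`, `m ∈ 𝓜`, `i > i_k`:
`P[ |β_{i,m} − α_m| > ε ] ≤ 2 exp(−φ̃_i ε²)`. -/
theorem stmt_6
    {Ω : Type*} [MeasurableSpace Ω] (μ : Measure Ω) [IsProbabilityMeasure μ]
    (M : ℕ) (hM : 1 ≤ M)
    (α : ℕ → ℝ) (hα : ∀ m ∈ Finset.Icc 1 M, α m ∈ Set.Icc (0 : ℝ) 1)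
    (hα1 : ∑ m ∈ Finset.Icc 1 M, α m = 1)
    (R : ℕ → Ω → ℕ) (hRrange : ∀ i, 1 ≤ i → ∀ ω, R i ω ∈ Finset.Icc 1 M)
    (hRmeas : ∀ i, Measurable (R i))
    (w : ℕ → ℝ) (hw : ∀ j, 0 ≤ w j) (hw1 : 0 < w 1)
    (γ : ℕ → ℝ) (hγ : ∀ i, γ i ∈ Set.Icc (0 : ℝ) 1)
    (hγsup : ∃ g, g < 1 ∧ ∀ i, γ i ≤ g)
    (η : ℕ → ℝ) (hη : ∀ i, η i ∈ Set.Icc (0 : ℝ) 1)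
    -- `(k, m̃, 𝓘)`-misbehavior with `𝓘` finite, `ik = max 𝓘` the last injected index
    (I : Finset ℕ) (hI1 : ∀ i ∈ I, 1 ≤ i)
    (ik : ℕ) (hik : ik ∈ I) (hikmax : ∀ j ∈ I, j ≤ ik)
    (mtil : ℕ) (hmtil : mtil ∈ Finset.Icc 1 M)
    (hmis : ∀ i ∈ I, ∀ ω, R i ω = mtil)
    -- outside the injected indices, ratings follow the linear herding model
    (hmodel : ∀ i : ℕ, 1 ≤ i → (i + 1) ∉ I → ∀ m ∈ Finset.Icc 1 M,
      μ[(fun ω => if R (i + 1) ω = m then (1 : ℝ) else 0) | Hsig R i]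
        =ᵐ[μ] fun ω =>
          γ i * ((1 - η i) * betaH w R i m ω + η i * α m) + (1 - γ i) * α m)
    -- Condition (2): `∑ w̃_i = ∞` and `∑ w̃_i² < ∞`
    (hdiv : Tendsto (fun n => ∑ i ∈ Finset.Icc 1 n, wnorm w i) atTop atTop)
    (hsq : Summable fun i : ℕ => (wnorm w (i + 1)) ^ 2) :
    ∀ ε : ℝ, 0 < ε → ε ≤ 1 → ∀ m ∈ Finset.Icc 1 M, ∀ i : ℕ, ik < i →
      μ {ω | ε < |betaH w R i m ω - α m|}
        ≤ ENNReal.ofReal (2 * Real.exp (-(phiTilde (wnorm w) γ η ik ε i) * ε ^ 2)) :=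
  stmt_6_general μ M α hα R hRmeas w hw hw1 γ hγ η hη I hI1 ik hik hikmax hmodel
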